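/- arXiv:1910.10001 — 2 statements merged into one kernel-verified Lean document; each statement's English description precedes it below -/
import Mathlib

section
/- Let H ⊆ H′ be partial building sets in a geometric lattice L (with respect to a building set G). If S ⊆ H′ is H′-nested, then the blow-down Π(S) = {h ∈ H : h ≤ π(g) for some g ∈ S} is H-nested, where π : L(L,H′) → L(L,H) is the blow-down map and elements of H, H′ are identified with atoms of the respective blown-up semilattices. -/
/-- A finite lattice is geometric if it is atomistic and (upper) semimodular. -/
def IsGeomLat (L : Type) [Lattice L] [BoundedOrder L] [Fintype L] : Prop :=
  (∀ x : L, IsLUB {a : L | IsAtom a ∧ a ≤ x} x) ∧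
  ∀ a b : L, a ⊓ b ⋖ a → b ⋖ a ⊔ b

/-- The set of factors `F(L,G;x) = max G_{≤x}` of an element `x` with respect to
a subset `G ⊆ L`. -/
def factorsOf {L : Type} [Lattice L] [BoundedOrder L] (G : Set L) (x : L) : Set L :=
  {g | g ∈ G ∧ g ≤ x ∧ ∀ h ∈ G, h ≤ x → g ≤ h → g = h}

/-- A combinatorial building set in a (geometric) lattice `L`: a set `G` of
elements `> ⊥` such that for each `x > ⊥`, the join map from the product of the
lower intervals `[⊥, g]`, `g ∈ max G_{≤x}`, to `[⊥, x]` is a poset isomorphism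
sending the `g`-th "unit vector" to `g`. -/
def IsBuildingSet (L : Type) [Lattice L] [BoundedOrder L] [Fintype L] [DecidableEq L]
    (G : Set L) : Prop :=
  (∀ g ∈ G, ⊥ < g) ∧
  ∀ x : L, ⊥ < x →
    ∃ φ : ((g : factorsOf G x) → ↥(Set.Iic (g : L))) ≃o ↥(Set.Iic x),
      ∀ g : factorsOf G x,
        φ (fun h => if hh : h = g then ⟨(g : L), by simp [hh]⟩ else ⟨⊥, bot_le⟩) =
          ⟨(g : L), g.2.2.1⟩

/-- A partial building set `H` inside a building set `G`: `H ⊆ G`, `H` contains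
all atoms, and the non-atomic part of `H` is an order filter of `G`. -/
def IsPartialBuilding (L : Type) [Lattice L] [BoundedOrder L] [Fintype L] [DecidableEq L]
    (G H : Set L) : Prop :=
  H ⊆ G ∧ {a : L | IsAtom a} ⊆ H ∧
  ∀ g ∈ H, ¬ IsAtom g → ∀ h ∈ G, g ≤ h → h ∈ H

/-- `N` is `H`-nested: every antichain in `N` with at least two elements has its
join (computed in `L`) outside of `H`. -/
def IsNestedIn (L : Type) [Lattice L] [OrderBot L] (H : Set L) (N : Set L) : Prop :=
  ∀ S : Finset L, ↑S ⊆ N → 2 ≤ S.card → IsAntichain (· ≤ ·) (S : Set L) →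
    S.sup id ∉ H

open Classical in
/-- One step of the blow-down map `Π` on subsets of a partial building set:
undoing the blowup at `p` replaces `p` (if present) by the atoms of `L`
below `p`; this agrees with `Π(S) = {h ∈ H : h ≤ π(g) for some g ∈ S}`. -/
noncomputable def PiStep {L : Type} [Lattice L] [OrderBot L] (p : L) (S : Set L) : Set L :=
  if p ∈ S then (S \ {p}) ∪ {a : L | IsAtom a ∧ a ≤ p} else S

/-- The composite blow-down map `Π^{H'}_H`, undoing the blowups at the elements
of `H' ∖ H` (listed in the order in which they are undone, i.e. reverse
blowup order). -/
noncomputable def PiComp {L : Type} [Lattice L] [OrderBot L] (l : List L) (S : Set L) :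
    Set L :=
  l.foldl (fun T q => PiStep q T) S

/-! `Π` undoes the blowups one at a time, each at an element `q` that is minimal among the
non-atoms still present, so it suffices that a single such step preserves nestedness. That step
rests on one consequence of the building-set axiom: two elements of `G` with a nonzero meet have
their join in `G`, because distinct factors of an element meet in `⊥`. -/

lemma exists_mem_factorsOf_ge {L : Type} [Lattice L] [BoundedOrder L] [Finite L] {G : Set L}
    {x g : L} (hg : g ∈ G) (hgx : g ≤ x) : ∃ f ∈ factorsOf G x, g ≤ f := by
  obtain ⟨f, hgf, ⟨hfG, hfx⟩, hmax⟩ :=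
    Finite.exists_le_maximal (p := fun k => k ∈ G ∧ k ≤ x) ⟨hg, hgx⟩
  exact ⟨f, ⟨hfG, hfx, fun h hh hhx hfh => le_antisymm hfh (hmax ⟨hh, hhx⟩ hfh)⟩, hgf⟩

section OrderBot

variable {L : Type} [Lattice L] [OrderBot L]

lemma Finset.not_isAtom_sup_of_one_lt_card {S : Finset L} (hpos : ∀ x ∈ S, ⊥ < x)
    (hcard : 1 < S.card) : ¬ IsAtom (S.sup id) := by
  intro hatom
  obtain ⟨x, hx, y, hy, hxy⟩ := Finset.one_lt_card.mp hcard
  have eq_sup : ∀ z ∈ S, z = S.sup id := fun z hz =>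
    (hatom.le_iff.mp (Finset.le_sup (f := id) hz)).resolve_left (hpos z hz).ne'
  exact hxy ((eq_sup x hx).trans (eq_sup y hy).symm)

lemma Finset.sup_insert_filter_not_le [DecidableEq L] (q : L) (S : Finset L)
    [DecidablePred (· ≤ q)] : (insert q (S.filter (¬ · ≤ q))).sup id = q ⊔ S.sup id := by
  refine le_antisymm (Finset.sup_le fun x hx => ?_) (sup_le ?_ (Finset.sup_le fun x hx => ?_))
  · rcases Finset.mem_insert.mp hx with rfl | hx
    · exact le_sup_left
    · exact le_sup_of_le_right (Finset.le_sup (f := id) (Finset.mem_filter.mp hx).1)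
  · exact Finset.le_sup (f := id) (Finset.mem_insert_self q _)
  · by_cases hxq : x ≤ q
    · exact hxq.trans (Finset.le_sup (f := id) (Finset.mem_insert_self q _))
    · exact Finset.le_sup (f := id) (Finset.mem_insert_of_mem (Finset.mem_filter.mpr ⟨hx, hxq⟩))

lemma IsNestedIn.anti {H₁ H₂ N : Set L} (hH : H₁ ⊆ H₂) (hN : IsNestedIn L H₂ N) :
    IsNestedIn L H₁ N :=
  fun S hS hcard hanti hsup => hN S hS hcard hanti (hH hsup)

lemma PiStep_of_notMem {q : L} {T : Set L} (hq : q ∉ T) : PiStep q T = T := if_neg hq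

lemma PiStep_of_mem {q : L} {T : Set L} (hq : q ∈ T) :
    PiStep q T = (T \ {q}) ∪ {a : L | IsAtom a ∧ a ≤ q} := if_pos hq

lemma PiStep_subset_diff_singleton {H : Set L} (hatoms : {a : L | IsAtom a} ⊆ H) {q : L}
    (hq : ¬ IsAtom q) {T : Set L} (hT : T ⊆ H) : PiStep q T ⊆ H \ {q} := by
  by_cases hqT : q ∈ T
  · rw [PiStep_of_mem hqT]
    rintro x (hx | ⟨hx, -⟩)
    · exact ⟨hT hx.1, hx.2⟩
    · exact ⟨hatoms hx, fun e => hq (e ▸ hx)⟩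
  · rw [PiStep_of_notMem hqT]
    exact fun x hx => ⟨hT hx, fun e => hqT (e ▸ hx)⟩

end OrderBot

section BuildingSet

variable {L : Type} [Lattice L] [BoundedOrder L] [Fintype L] [DecidableEq L] {G : Set L}

lemma IsBuildingSet.inf_eq_bot_of_mem_factorsOf (hG : IsBuildingSet L G) {x f₁ f₂ : L}
    (h₁ : f₁ ∈ factorsOf G x) (h₂ : f₂ ∈ factorsOf G x) (hne : f₁ ≠ f₂) : f₁ ⊓ f₂ = ⊥ := by
  obtain ⟨φ, hφ⟩ := hG.2 x ((hG.1 f₁ h₁.1).trans_le h₁.2.1)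
  let unit (F : factorsOf G x) : (g : factorsOf G x) → ↥(Set.Iic (g : L)) :=
    fun g => if hg : g = F then ⟨(F : L), by simp [hg]⟩ else ⟨⊥, bot_le⟩
  let F₁ : factorsOf G x := ⟨f₁, h₁⟩
  let F₂ : factorsOf G x := ⟨f₂, h₂⟩
  have hdisj : unit F₁ ⊓ unit F₂ = ⊥ := by
    funext g
    apply Subtype.ext
    by_cases hg₁ : g = F₁
    · have hF : F₁ ≠ F₂ := fun e => hne (congrArg Subtype.val e)
      subst hg₁
      simp [unit, hF]
    · simp [unit, hg₁]
  calc f₁ ⊓ f₂ = ((φ (unit F₁) ⊓ φ (unit F₂) : Set.Iic x) : L) := by rw [hφ F₁, hφ F₂]; rfl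
    _ = ⊥ := by rw [← φ.map_inf, hdisj, φ.map_bot]; rfl

lemma IsBuildingSet.sup_mem_of_inf_ne_bot (hG : IsBuildingSet L G) {g h : L} (hg : g ∈ G)
    (hh : h ∈ G) (hgh : g ⊓ h ≠ ⊥) : g ⊔ h ∈ G := by
  obtain ⟨f₁, hf₁, hgf₁⟩ := exists_mem_factorsOf_ge hg (le_sup_left : g ≤ g ⊔ h)
  obtain ⟨f₂, hf₂, hhf₂⟩ := exists_mem_factorsOf_ge hh (le_sup_right : h ≤ g ⊔ h)
  obtain rfl : f₁ = f₂ := by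
    by_contra hne
    exact hgh (le_bot_iff.mp (hG.inf_eq_bot_of_mem_factorsOf hf₁ hf₂ hne ▸ inf_le_inf hgf₁ hhf₂))
  exact le_antisymm hf₁.2.1 (sup_le hgf₁ hhf₂) ▸ hf₁.1

variable {H : Set L}

/-- If an antichain `S` in `PiStep q T` had its join `j` in `H`, then `S` meets the new atoms
below `q`, so `q ⊓ j ≠ ⊥`; replacing those atoms by `q` gives an antichain in `T` with join
`q ⊔ j`, which lies in `H`. -/
lemma IsNestedIn.PiStep (hG : IsBuildingSet L G) (hH : IsPartialBuilding L G H) {q : L}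
    (hqA : ¬ IsAtom q) (hmin : ∀ x ∈ H, x < q → IsAtom x) {T : Set L} (hT : T ⊆ H)
    (hTn : IsNestedIn L H T) : IsNestedIn L (H \ {q}) (PiStep q T) := by
  classical
  by_cases hqT : q ∈ T
  swap
  · rw [PiStep_of_notMem hqT]
    exact hTn.anti Set.sdiff_subset
  intro S hS hcard hanti ⟨hjH, hjq⟩
  set j := S.sup id
  have hSpos : ∀ x ∈ S, ⊥ < x := fun x hx =>
    hG.1 x (hH.1 (PiStep_subset_diff_singleton hH.2.1 hqA hT (hS hx)).1)
  have hjA : ¬ IsAtom j := Finset.not_isAtom_sup_of_one_lt_card hSpos hcard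
  rw [PiStep_of_mem hqT] at hS
  obtain ⟨f, hfS, hfq⟩ : ∃ f ∈ S, f ≤ q := by
    by_contra! hnone
    exact hTn S (fun x hx => ((hS hx).resolve_right fun h => hnone x hx h.2).1)
      hcard hanti hjH
  have hjnq : ¬ j ≤ q := fun hle => hjA (hmin j hjH (lt_of_le_of_ne hle hjq))
  set E := S.filter (¬ · ≤ q)
  have hEne : E.Nonempty :=
    Finset.filter_nonempty_iff.mpr (by by_contra! h; exact hjnq (Finset.sup_le h))
  have hES : E ⊆ S := Finset.filter_subset _ S
  have hEnq : ∀ x ∈ E, ¬ x ≤ q := fun x hx => (Finset.mem_filter.mp hx).2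
  have hET : ↑(insert q E) ⊆ T := by
    rw [Finset.coe_insert]
    refine Set.insert_subset hqT fun x hx => ?_
    exact ((hS (hES hx)).resolve_right fun h => hEnq x hx h.2).1
  have hEanti : IsAntichain (· ≤ ·) (↑(insert q E) : Set L) := by
    rw [Finset.coe_insert]
    refine (hanti.subset (Finset.coe_subset.mpr hES)).insert
      (fun x hx _ => hEnq x hx) (fun x hx _ hqx => ?_)
    exact hanti hfS (hES hx) (fun e => hEnq x hx (e ▸ hfq)) (hfq.trans hqx)
  have hEcard : 2 ≤ (insert q E).card := by
    rw [Finset.card_insert_of_notMem fun h => hEnq q h le_rfl]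
    exact Nat.succ_le_succ hEne.card_pos
  have hqj : q ⊓ j ≠ ⊥ := fun h =>
    (hSpos f hfS).ne' (le_bot_iff.mp (h ▸ le_inf hfq (Finset.le_sup (f := id) hfS)))
  have hsup : (insert q E).sup id ∈ H := by
    rw [Finset.sup_insert_filter_not_le]
    exact hH.2.2 j hjH hjA _ (hG.sup_mem_of_inf_ne_bot (hH.1 (hT hqT)) (hH.1 hjH) hqj)
      le_sup_right
  exact hTn _ hET hEcard hEanti hsup

lemma IsPartialBuilding.diff_singleton (hH : IsPartialBuilding L G H) {q : L}
    (hqA : ¬ IsAtom q) (hmin : ∀ x ∈ H, x < q → IsAtom x) : IsPartialBuilding L G (H \ {q}) := by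
  refine ⟨Set.sdiff_subset.trans hH.1, fun a ha => ⟨hH.2.1 ha, fun e => hqA (e ▸ ha)⟩, ?_⟩
  rintro g ⟨hgH, hgq⟩ hgA h hhG hgh
  refine ⟨hH.2.2 g hgH hgA h hhG hgh, ?_⟩
  rintro rfl
  exact hgA (hmin g hgH (lt_of_le_of_ne hgh hgq))

/-- Each `q` in turn is minimal among the non-atoms of the current `H'`: anything smaller lies
either in `H`, whose filter property would put `q` in `H`, or later in `l`, which the ordering
forbids. -/
theorem PiComp_subset_and_isNestedIn (hG : IsBuildingSet L G) (hH : IsPartialBuilding L G H)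
    (l : List L) {H' : Set L} (hH' : IsPartialBuilding L G H') (hsub : H ⊆ H')
    (hmem : ∀ q, q ∈ l ↔ q ∈ H' \ H) (hnd : l.Nodup) (hord : l.Pairwise fun a b => ¬ b < a)
    {T : Set L} (hT : T ⊆ H') (hTn : IsNestedIn L H' T) :
    PiComp l T ⊆ H ∧ IsNestedIn L H (PiComp l T) := by
  induction l generalizing H' T with
  | nil =>
    obtain rfl : H' = H :=
      le_antisymm (fun q hq => by_contra fun hqH => by simpa using (hmem q).mpr ⟨hq, hqH⟩) hsub
    exact ⟨hT, hTn⟩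
  | cons q l ih =>
    obtain ⟨hqH', hqH⟩ := (hmem q).mp List.mem_cons_self
    have hqA : ¬ IsAtom q := fun h => hqH (hH.2.1 h)
    have hmin : ∀ x ∈ H', x < q → IsAtom x := by
      intro x hx hxq
      by_contra hxA
      by_cases hxH : x ∈ H
      · exact hqH (hH.2.2 x hxH hxA q (hH'.1 hqH') hxq.le)
      · have hxl : x ∈ l := ((List.mem_cons.mp ((hmem x).mpr ⟨hx, hxH⟩)).resolve_left hxq.ne)
        exact List.rel_of_pairwise_cons hord hxl hxq
    obtain ⟨hql, hnd⟩ := List.nodup_cons.mp hnd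
    have hmem' : ∀ x, x ∈ l ↔ x ∈ (H' \ {q}) \ H := fun x => by
      have hx := hmem x
      simp only [List.mem_cons, Set.mem_sdiff, Set.mem_singleton_iff] at hx ⊢
      constructor
      · exact fun hxl => ⟨⟨(hx.mp (.inr hxl)).1, fun e => hql (e ▸ hxl)⟩, (hx.mp (.inr hxl)).2⟩
      · exact fun ⟨⟨hxH', hxq⟩, hxH⟩ => (hx.mpr ⟨hxH', hxH⟩).resolve_left hxq
    exact ih (hH'.diff_singleton hqA hmin) (fun x hx => ⟨hsub hx, fun e => hqH (e ▸ hx)⟩)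
      hmem' hnd (List.pairwise_cons.mp hord).2
      (PiStep_subset_diff_singleton hH'.2.1 hqA hT) (hTn.PiStep hG hH' hqA hmin hT)

end BuildingSet

theorem PiComp_nested_general {L : Type} [Lattice L] [BoundedOrder L] [Fintype L] [DecidableEq L]
    (G : Set L) (hG : IsBuildingSet L G)
    (H H' : Set L) (hH : IsPartialBuilding L G H) (hH' : IsPartialBuilding L G H')
    (hsub : H ⊆ H')
    (l : List L) (hmem : ∀ q, q ∈ l ↔ q ∈ H' \ H) (hnd : l.Nodup)
    (hord : ∀ i j : Fin l.length, l.get i < l.get j → i < j)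
    (S : Set L) (hS : S ⊆ H') (hnest : IsNestedIn L H' S) :
    PiComp l S ⊆ H ∧ IsNestedIn L H (PiComp l S) :=
  PiComp_subset_and_isNestedIn hG hH l hH' hsub hmem hnd
    (List.pairwise_iff_get.mpr fun i j hij hlt => lt_asymm hij (hord j i hlt)) hS hnest

/-- if `H ⊆ H'` are partial building sets in a geometric lattice
`L` and `S ⊆ H'` is `H'`-nested, then the blow-down `Π^{H'}_H(S)` is a subset of
`H` and is `H`-nested. -/
theorem PiComp_nested {L : Type} [Lattice L] [BoundedOrder L] [Fintype L] [DecidableEq L]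
    (hgeo : IsGeomLat L) (G : Set L) (hG : IsBuildingSet L G) (htop : ⊤ ∈ G)
    (H H' : Set L) (hH : IsPartialBuilding L G H) (hH' : IsPartialBuilding L G H')
    (hsub : H ⊆ H')
    (l : List L) (hmem : ∀ q, q ∈ l ↔ q ∈ H' \ H) (hnd : l.Nodup)
    (hord : ∀ i j : Fin l.length, l.get i < l.get j → i < j)
    (S : Set L) (hS : S ⊆ H') (hnest : IsNestedIn L H' S) :
    PiComp l S ⊆ H ∧ IsNestedIn L H (PiComp l S) :=
  PiComp_nested_general G hG H H' hH hH' hsub l hmem hnd hord S hS hnest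
end

section
/- Let H be a partial building set in a geometric lattice L. A subset N ⊆ H is H-nested if and only if, viewing H as the atom set of the blown-up semilattice L(L,H), the set N has an upper bound in L(L,H) (i.e., N is a simplex of the atomic complex K(L(L,H))). -/
/-- A carrier type with an order relation and a membership predicate, used to
build iterated combinatorial blowups. -/
structure PreP : Type 1 where
  α : Type
  le : α → α → Prop
  mem : α → Prop

/-- One combinatorial blowup step at an element `p`: valid elements are the old
elements `x ≱ p` (left summand) and the new pairs `(p,x)` with `x ≱ p` such
that the join `p ∨ x` exists (right summand), with the Feichtner–Kozlov order. -/
def blowStep (P : PreP) (p : P.α) : PreP where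
  α := P.α ⊕ P.α
  le a b :=
    match a, b with
    | .inl x, .inl y => P.le x y
    | .inl x, .inr y => P.le x y
    | .inr x, .inr y => P.le x y
    | .inr _, .inl _ => False
  mem a :=
    match a with
    | .inl x => P.mem x ∧ ¬ P.le p x
    | .inr x => P.mem x ∧ ¬ P.le p x ∧
        ∃ j, P.mem j ∧ P.le x j ∧ P.le p j ∧
          ∀ u, P.mem u → P.le x u → P.le p u → P.le j u

/-- The iterated combinatorial blowup of `L` at the elements of a list `l`
(performed from the tail of the list towards the head, so that the head is
blown up last), together with the canonical embedding of the surviving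
elements of `L`. -/
def iterBl (L : Type) [LE L] : List L → (P : PreP) × (L → P.α)
  | [] => ⟨⟨L, (· ≤ ·), fun _ => True⟩, id⟩
  | p :: l =>
    let r := iterBl L l
    ⟨blowStep r.1 (r.2 p), fun x => Sum.inl (r.2 x)⟩

/-- The total blow-down map from the iterated blowup back to `L`. -/
def blowDown (L : Type) [Lattice L] : (l : List L) → (iterBl L l).1.α → L
  | [], z => z
  | p :: l, z =>
    Sum.elim (fun y => blowDown L l y) (fun y => blowDown L l y ⊔ p) z

/-- `w` is the minimum of `(P.α, P.le)` restricted to `P.mem`. -/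
def IsBotP (P : PreP) (w : P.α) : Prop :=
  P.mem w ∧ ∀ u, P.mem u → P.le w u

/-- `a` is an atom of `(P.α, P.le)` restricted to `P.mem`. -/
def IsAtomP (P : PreP) (a : P.α) : Prop :=
  P.mem a ∧ ¬ IsBotP P a ∧ ∀ w, P.mem w → P.le w a → w = a ∨ IsBotP P w

/-!
An element of the iterated blowup is determined by its coordinates `(x, M)`: a base element
`x ∈ L` and the set `M ⊆ H°` of centres it carries. The blowup order is the product order,
`blowDown` is `x ⊔ ⋁ M`, and membership is a recursive admissibility condition that is closed
downwards, so the atoms of the blowup are `(a, ∅)` for atoms `a` and `(⊥, {h})` for `h ∈ H°`.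

If `N` is nested, `(⋁ (atoms of N), N ∩ H°)` is admissible, hence an upper bound. Indeed, an
element `q ∈ H°` below the join of some `B ⊆ N` lies below a factor `g ∈ H` of that join; by
the building-set decomposition `g` is the join of a subset of `B`, and nestedness forces a
maximal antichain of that subset to be `{g}`, so `q` lies below an element of `B`. Conversely,
if `z` bounds `N` and `S ⊆ N` is an antichain with join `h ∈ H`, then `h ∈ H°` lies below the
base of `z` joined with centres of `z` that are blown up after `h`, which admissibility forbids.
-/

theorem Prod.isAtom_iff {α β : Type*} [PartialOrder α] [OrderBot α] [PartialOrder β]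
    [OrderBot β] {x : α × β} : IsAtom x ↔ IsAtom x.1 ∧ x.2 = ⊥ ∨ IsAtom x.2 ∧ x.1 = ⊥ := by
  obtain ⟨a, b⟩ := x
  simp only [← bot_covBy_iff]
  exact Prod.mk_covBy_mk_iff.trans (by simp only [eq_comm])

theorem Finset.exists_antichain_subset_sup_eq {α : Type*} [SemilatticeSup α] [OrderBot α]
    (C : Finset α) : ∃ A ⊆ C, IsAntichain (· ≤ ·) (A : Set α) ∧ A.sup id = C.sup id := by
  classical
  refine ⟨C.filter (Maximal (· ∈ C)), C.filter_subset _, ?_, ?_⟩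
  · exact (setOfPred_maximal_antichain _).subset fun a ha => (Finset.mem_filter.1 ha).2
  · refine le_antisymm (Finset.sup_mono (C.filter_subset _)) (Finset.sup_le fun b hb => ?_)
    obtain ⟨c, hbc, hc⟩ := C.exists_le_maximal hb
    exact hbc.trans (Finset.le_sup (f := id) (Finset.mem_filter.2 ⟨hc.prop, hc⟩))

theorem IsAntichain.lt_sup_of_two_le_card {α : Type*} [SemilatticeSup α] [OrderBot α]
    {S : Finset α} (hS : IsAntichain (· ≤ ·) (S : Set α)) (hcard : 2 ≤ S.card) {b : α}
    (hb : b ∈ S) : b < S.sup id := by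
  refine (Finset.le_sup (f := id) hb).lt_of_ne fun heq => ?_
  obtain ⟨c, hc, hcb⟩ := S.exists_mem_ne hcard b
  exact hS hc hb hcb ((Finset.le_sup (f := id) hc).trans heq.ge)

theorem List.pairwise_not_le_of_get_lt {α : Type*} [PartialOrder α] {l : List α}
    (hl : l.Nodup) (h : ∀ i j : Fin l.length, l.get i < l.get j → i < j) :
    l.Pairwise (fun a b => ¬ b ≤ a) := by
  rw [List.pairwise_iff_get]
  intro i j hij hle
  rcases hle.lt_or_eq with hlt | heq
  · exact (h j i hlt).asymm hij
  · exact hij.ne' (hl.get_inj_iff.1 heq)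

theorem List.Pairwise.nodup_of_not_le {α : Type*} [Preorder α] {l : List α}
    (h : l.Pairwise (fun a b => ¬ b ≤ a)) : l.Nodup :=
  h.imp fun hab e => hab e.ge

section BuildingSet

variable {L : Type} [Lattice L] [BoundedOrder L]

theorem exists_mem_factorsOf_ge_s10 [Finite L] {G : Set L} {s e : L} (he : e ∈ G) (hes : e ≤ s) :
    ∃ g ∈ factorsOf G s, e ≤ g := by
  obtain ⟨g, heg, hg⟩ := (Set.toFinite {c | c ∈ G ∧ c ≤ s}).exists_le_maximal ⟨he, hes⟩
  exact ⟨g, ⟨hg.prop.1, hg.prop.2, fun h hG hs hgh => le_antisymm hgh (hg.2 ⟨hG, hs⟩ hgh)⟩, heg⟩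

theorem exists_subset_sup_eq_of_mem_factorsOf [Fintype L] [DecidableEq L] {G : Set L}
    (hG : IsBuildingSet L G) {B : Finset L} (hBG : ∀ b ∈ B, b ∈ G) {g : L}
    (hg : g ∈ factorsOf G (B.sup id)) : ∃ C ⊆ B, C.sup id = g := by
  classical
  set s := B.sup id
  obtain ⟨φ, hφ⟩ := hG.2 s ((hG.1 g hg.1).trans_le hg.2.1)
  -- Under `φ.symm`, the `g`-component of `b ∈ B` vanishes unless `b ≤ g`; since `⋁ B = s` has
  -- full `g`-component, so has the join `C` of the elements of `B` below `g`.
  have hsupp : ∀ (x : L) (hx : x ∈ Set.Iic s) (g' : factorsOf G s), x ≤ g' →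
      ∀ h ≠ g', φ.symm ⟨x, hx⟩ h ≤ ⊥ := by
    intro x hx g' hxg' h hh
    have hle : φ.symm ⟨x, hx⟩ ≤ φ.symm ⟨g', g'.2.2.1⟩ := φ.symm.monotone hxg'
    rw [← hφ g', φ.symm_apply_apply] at hle
    exact (hle h).trans_eq (by simp only [dif_neg hh]; rfl)
  set gg : factorsOf G s := ⟨g, hg⟩
  set C := B.filter (· ≤ g)
  refine ⟨C, B.filter_subset _,
    le_antisymm (Finset.sup_le fun b hb => (Finset.mem_filter.1 hb).2) ?_⟩
  have hCs : C.sup id ∈ Set.Iic s := Finset.sup_mono (B.filter_subset _)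
  set w := Function.update (⊤ : (g' : factorsOf G s) → Set.Iic (g' : L)) gg
    (φ.symm ⟨C.sup id, hCs⟩ gg)
  have hsw : s ≤ φ w := Finset.sup_le fun b hb => by
    have hbs : b ∈ Set.Iic s := Finset.le_sup (f := id) hb
    change (⟨b, hbs⟩ : Set.Iic s) ≤ φ w
    rw [← φ.symm_apply_le]
    intro h
    rcases eq_or_ne h gg with rfl | hh
    · simp only [w, Function.update_self]
      by_cases hbg : b ≤ g
      · exact φ.symm.monotone (a := ⟨b, hbs⟩) (b := ⟨C.sup id, hCs⟩)
          (Finset.le_sup (f := id) (Finset.mem_filter.2 ⟨hb, hbg⟩)) gg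
      · obtain ⟨g', hg', hbg'⟩ := exists_mem_factorsOf_ge_s10 (hBG b hb) hbs
        exact (hsupp b hbs ⟨g', hg'⟩ hbg' gg
          fun h => hbg (hbg'.trans_eq (congrArg Subtype.val h).symm)).trans bot_le
    · simp only [w, Function.update_of_ne hh]
      exact le_top
  have htop : φ.symm ⟨C.sup id, hCs⟩ gg = ⊤ := by
    have : φ.symm ⊤ ≤ w := φ.symm_apply_le.2 hsw
    simpa [w] using this gg
  have hunit : φ.symm ⟨g, hg.2.1⟩ ≤ φ.symm ⟨C.sup id, hCs⟩ := by
    rw [← hφ gg, φ.symm_apply_apply]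
    intro h
    rcases eq_or_ne h gg with rfl | hh
    · rw [htop]; exact le_top
    · simp only [dif_neg hh]; exact bot_le
  exact φ.symm.le_iff_le.1 hunit

theorem IsNestedIn.exists_mem_ge [Fintype L] [DecidableEq L] {G H N : Set L}
    (hnest : IsNestedIn L H N) (hG : IsBuildingSet L G) (hH : IsPartialBuilding L G H)
    (hN : N ⊆ H) {B : Finset L} (hB : ↑B ⊆ N) {q : L} (hqH : q ∈ H) (hq : ¬ IsAtom q)
    (hqB : q ≤ B.sup id) :
    ∃ b ∈ B, q ≤ b := by
  obtain ⟨g, hg, hqg⟩ := exists_mem_factorsOf_ge_s10 (hH.1 hqH) hqB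
  have hgH : g ∈ H := hH.2.2 q hqH hq g hg.1 hqg
  obtain ⟨C, hCB, hCg⟩ :=
    exists_subset_sup_eq_of_mem_factorsOf hG (fun b hb => hH.1 (hN (hB hb))) hg
  obtain ⟨A, hAC, hA, hAg⟩ := C.exists_antichain_subset_sup_eq
  rw [hCg] at hAg
  have hcard : A.card ≤ 1 := by
    by_contra h
    exact hnest A (fun a ha => hB (hCB (hAC ha))) (by omega) hA (hAg ▸ hgH)
  obtain ⟨b, hAb⟩ := Finset.card_le_one_iff_subset_singleton.1 hcard
  rcases Finset.subset_singleton_iff.1 hAb with rfl | rfl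
  · rw [Finset.sup_empty] at hAg
    exact absurd hAg (hG.1 g hg.1).ne
  · rw [Finset.sup_singleton, id] at hAg
    exact ⟨b, hCB (hAC (Finset.mem_singleton_self b)), hAg ▸ hqg⟩

end BuildingSet

theorem isAtomP_iff_isAtom {P : PreP} {β : Type*} [PartialOrder β] [OrderBot β] {e : P.α → β}
    (he : Function.Injective e) (hle : ∀ a b, P.le a b ↔ e a ≤ e b)
    (hdown : ∀ a, P.mem a → ∀ y ≤ e a, ∃ w, P.mem w ∧ e w = y) {a : P.α} :
    IsAtomP P a ↔ P.mem a ∧ IsAtom (e a) := by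
  have hbot : ∀ {w}, P.mem w → (IsBotP P w ↔ e w = ⊥) := by
    intro w hw
    obtain ⟨w₀, hw₀, he₀⟩ := hdown w hw ⊥ bot_le
    refine ⟨fun h => le_bot_iff.1 (he₀ ▸ (hle w w₀).1 (h.2 w₀ hw₀)), fun h => ⟨hw, ?_⟩⟩
    exact fun u _ => (hle w u).2 (h ▸ bot_le)
  constructor
  · rintro ⟨ha, hnbot, hmin⟩
    refine ⟨ha, fun h => hnbot ((hbot ha).2 h), fun y hy => ?_⟩
    obtain ⟨w, hw, rfl⟩ := hdown a ha y hy.le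
    rcases hmin w hw ((hle w a).2 hy.le) with rfl | hwbot
    · exact absurd rfl hy.ne
    · exact (hbot hw).1 hwbot
  · rintro ⟨ha, hat⟩
    refine ⟨ha, fun h => hat.1 ((hbot ha).1 h), fun w hw hwa => ?_⟩
    rcases hat.le_iff.1 ((hle w a).1 hwa) with h | h
    · exact Or.inr ((hbot hw).2 h)
    · exact Or.inl (he h)

section Coordinates

variable {L : Type} [Lattice L] [DecidableEq L]

/-- An element of the iterated blowup is recorded by its base element of `L` and the set of
centres `p` at which it lies in the new (right) summand. -/
def blCoords : (l : List L) → (iterBl L l).1.α → L × Finset L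
  | [], z => (z, ∅)
  | _ :: l, .inl y => blCoords l y
  | p :: l, .inr y => ((blCoords l y).1, insert p (blCoords l y).2)

def blMk (x : L) (M : Finset L) : (l : List L) → (iterBl L l).1.α
  | [] => x
  | p :: l => if p ∈ M then .inr (blMk x M l) else .inl (blMk x M l)

theorem blCoords_snd_subset : ∀ (l : List L) (z), (blCoords l z).2 ⊆ l.toFinset
  | [], _ => Finset.empty_subset _
  | _ :: l, .inl y => (blCoords_snd_subset l y).trans (by simp)
  | _ :: l, .inr y => by
    simpa [blCoords] using Finset.insert_subset_insert _ (blCoords_snd_subset l y)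

theorem notMem_blCoords_snd {p : L} {l : List L} (hp : p ∉ l) (z : (iterBl L l).1.α) :
    p ∉ (blCoords l z).2 :=
  fun h => hp (List.mem_toFinset.1 (blCoords_snd_subset l z h))

theorem blCoords_emb : ∀ (l : List L) (x : L), blCoords l ((iterBl L l).2 x) = (x, ∅)
  | [], _ => rfl
  | _ :: l, x => blCoords_emb l x

theorem blCoords_blMk (x : L) (M : Finset L) :
    ∀ l : List L, blCoords l (blMk x M l) = (x, l.toFinset ∩ M)
  | [] => rfl
  | p :: l => by
    by_cases hp : p ∈ M <;>
      simp [blMk, blCoords, hp, blCoords_blMk x M l, Finset.insert_inter_of_mem,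
        Finset.insert_inter_of_notMem]

theorem blCoords_blMk_of_subset (x : L) {M : Finset L} {l : List L} (hM : M ⊆ l.toFinset) :
    blCoords l (blMk x M l) = (x, M) := by
  rw [blCoords_blMk, Finset.inter_eq_right.2 hM]

theorem blCoords_injective : ∀ {l : List L}, l.Nodup → Function.Injective (blCoords l)
  | [], _, _, _, h => congrArg Prod.fst h
  | p :: l, hl, a, b, h => by
    have hp := (List.nodup_cons.1 hl).1
    have ih := blCoords_injective (List.nodup_cons.1 hl).2
    match a, b with
    | .inl a, .inl b => exact congrArg _ (ih h)
    | .inr a, .inr b =>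
      simp only [blCoords, Prod.mk.injEq] at h
      refine congrArg _ (ih (Prod.ext h.1 ?_))
      rw [← Finset.erase_insert (notMem_blCoords_snd hp a), h.2,
        Finset.erase_insert (notMem_blCoords_snd hp b)]
    | .inl a, .inr b =>
      have h2 := congrArg Prod.snd h
      simp only [blCoords] at h2
      exact absurd (h2 ▸ Finset.mem_insert_self p _) (notMem_blCoords_snd hp a)
    | .inr a, .inl b =>
      have h2 := congrArg Prod.snd h
      simp only [blCoords] at h2
      exact absurd (h2 ▸ Finset.mem_insert_self p _) (notMem_blCoords_snd hp b)

theorem iterBl_le_iff : ∀ {l : List L}, l.Nodup → ∀ a b,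
    (iterBl L l).1.le a b ↔ blCoords l a ≤ blCoords l b
  | [], _, _, _ => (Prod.mk_le_mk.trans (and_iff_left le_rfl)).symm
  | p :: l, hl, a, b => by
    have hp := (List.nodup_cons.1 hl).1
    have ih := iterBl_le_iff (List.nodup_cons.1 hl).2
    match a, b with
    | .inl a, .inl b => exact ih a b
    | .inl a, .inr b =>
      simp only [blCoords, Prod.le_def,
        Finset.subset_insert_iff_of_notMem (notMem_blCoords_snd hp a)]
      exact (ih a b).trans Prod.le_def
    | .inr a, .inr b =>
      simp only [blCoords, Prod.le_def, Finset.insert_subset_insert_iff (notMem_blCoords_snd hp a)]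
      exact (ih a b).trans Prod.le_def
    | .inr a, .inl b =>
      simp only [blCoords, Prod.le_def, Finset.insert_subset_iff]
      exact iff_of_false id fun h => notMem_blCoords_snd hp b h.2.1

theorem blowDown_eq [OrderBot L] : ∀ (l : List L) (z),
    blowDown L l z = (blCoords l z).1 ⊔ (blCoords l z).2.sup id
  | [], z => (sup_bot_eq (α := L) z).symm
  | _ :: l, .inl y => blowDown_eq l y
  | p :: l, .inr y => by
    simp only [blowDown, Sum.elim_inr, blCoords, blowDown_eq l y, Finset.sup_insert]
    ac_rfl

end Coordinates

section Admissible

variable {L : Type} [Lattice L] [DecidableEq L]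

/-- Membership in `iterBl L l` read off the coordinates `(x, M)` (see `iterBl_mem_iff`); the last
clause says that the join of the element with the centre `p` exists one stage earlier. -/
def Admissible : List L → L → Finset L → Prop
  | [], _, _ => True
  | p :: l, x, M =>
    ¬ p ≤ x ∧ Admissible l x (M.erase p) ∧ (p ∈ M → Admissible l (x ⊔ p) (M.erase p))

theorem Admissible.mono : ∀ {l : List L} {x x' : L} {M M' : Finset L},
    Admissible l x M → x' ≤ x → M' ⊆ M → Admissible l x' M'
  | [], _, _, _, _, _, _, _ => trivial
  | p :: _, _, _, _, _, ⟨hpx, hM, hpM⟩, hx, hM' =>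
    ⟨fun h => hpx (h.trans hx), hM.mono hx (Finset.erase_subset_erase p hM'),
      fun hp => (hpM (hM' hp)).mono (sup_le_sup_right hx p) (Finset.erase_subset_erase p hM')⟩

theorem iterBl_mem_iff : ∀ {l : List L}, l.Nodup → ∀ z,
    (iterBl L l).1.mem z ↔ Admissible l (blCoords l z).1 (blCoords l z).2
  | [], _, _ => Iff.rfl
  | p :: l, hl, z => by
    have hp := (List.nodup_cons.1 hl).1
    have hl' := (List.nodup_cons.1 hl).2
    have ih := iterBl_mem_iff hl'
    have hcentre : ∀ y, (iterBl L l).1.le ((iterBl L l).2 p) y ↔ p ≤ (blCoords l y).1 := by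
      intro y
      rw [iterBl_le_iff hl', blCoords_emb, Prod.le_def]
      exact and_iff_left (Finset.empty_subset _)
    match z with
    | .inl y =>
      simp only [iterBl, blowStep, blCoords, Admissible, ih, hcentre,
        Finset.erase_eq_of_notMem (notMem_blCoords_snd hp y), notMem_blCoords_snd hp y,
        false_imp_iff, and_true]
      exact and_comm
    | .inr y =>
      have hc : blCoords l (blMk ((blCoords l y).1 ⊔ p) (blCoords l y).2 l) =
          ((blCoords l y).1 ⊔ p, (blCoords l y).2) :=
        blCoords_blMk_of_subset _ (blCoords_snd_subset l y)
      simp only [iterBl, blowStep, blCoords, Admissible, ih, hcentre, iterBl_le_iff hl',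
        Prod.le_def, Finset.erase_insert (notMem_blCoords_snd hp y), Finset.mem_insert_self,
        true_imp_iff]
      -- the join of `y` and the centre `p`, when it exists, has coordinates `(x ⊔ p, M)`
      refine (and_congr_right fun _ => and_congr_right fun _ =>
        ⟨?_, fun h => ⟨blMk ((blCoords l y).1 ⊔ p) (blCoords l y).2 l, ?_⟩⟩).trans and_left_comm
      · exact fun ⟨j, hj, ⟨hxj, hMj⟩, hpj, _⟩ => hj.mono (sup_le hxj hpj) hMj
      · rw [hc]
        exact ⟨h, ⟨le_sup_left, subset_rfl⟩, le_sup_right,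
          fun u _ ⟨hxu, hMu⟩ hpu => ⟨sup_le hxu hpu, hMu⟩⟩

theorem admissible_of_forall [OrderBot L] : ∀ {l : List L} {x : L} {M : Finset L},
    l.Pairwise (fun a b => ¬ b ≤ a) →
    (∀ R ⊆ M, ∀ q ∈ l, (∀ r ∈ R, ¬ q ≤ r) → ¬ q ≤ x ⊔ R.sup id) → Admissible l x M
  | [], _, _, _, _ => trivial
  | p :: _, x, M, hpw, h => by
    obtain ⟨hpl, hpw⟩ := List.pairwise_cons.1 hpw
    refine ⟨by simpa using h ∅ (Finset.empty_subset _) p List.mem_cons_self (by simp),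
      admissible_of_forall hpw fun R hR q hq hqR =>
        h R (hR.trans (M.erase_subset p)) q (List.mem_cons_of_mem p hq) hqR,
      fun hpM => admissible_of_forall hpw fun R hR q hq hqR => ?_⟩
    have := h (insert p R) (Finset.insert_subset hpM (hR.trans (M.erase_subset p))) q
      (List.mem_cons_of_mem p hq) ((Finset.forall_mem_insert _ _ _).2 ⟨hpl q hq, hqR⟩)
    rwa [Finset.sup_insert, id, ← sup_assoc] at this

theorem Admissible.not_le_sup [OrderBot L] : ∀ {l : List L} {x : L} {M R : Finset L} {q : L},
    l.Pairwise (fun a b => ¬ b ≤ a) → Admissible l x M → R ⊆ M → (∀ r ∈ R, r ∈ l) →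
    q ∈ l → (∀ r ∈ R, r < q) → ¬ q ≤ x ⊔ R.sup id
  | p :: l, x, M, R, q, hpw, ⟨hpx, hM, hpM⟩, hRM, hRl, hq, hRq => by
    obtain ⟨hpl, hpw⟩ := List.pairwise_cons.1 hpw
    have hRl' : ∀ r ∈ R, r ≠ p → r ∈ l := fun r hr hrp =>
      (List.mem_cons.1 (hRl r hr)).resolve_left hrp
    rcases List.mem_cons.1 hq with rfl | hq
    · have hR : R = ∅ := Finset.eq_empty_of_forall_notMem fun r hr =>
        hpl r (hRl' r hr (hRq r hr).ne) (hRq r hr).le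
      simpa [hR] using hpx
    by_cases hpR : p ∈ R
    · rw [← Finset.insert_erase hpR, Finset.sup_insert, id, ← sup_assoc]
      exact (hpM (hRM hpR)).not_le_sup hpw (Finset.erase_subset_erase p hRM)
        (fun r hr => hRl' r (Finset.mem_of_mem_erase hr) (Finset.ne_of_mem_erase hr)) hq
        (fun r hr => hRq r (Finset.mem_of_mem_erase hr))
    · exact hM.not_le_sup hpw (fun r hr => Finset.mem_erase.2 ⟨fun h => hpR (h ▸ hr), hRM hr⟩)
        (fun r hr => hRl' r hr fun h => hpR (h ▸ hr)) hq hRq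

end Admissible

def IsBoundedInBlowup (L : Type) [Lattice L] (l : List L) (N : Set L) : Prop :=
  ∃ z, (iterBl L l).1.mem z ∧ ∀ a, (iterBl L l).1.mem a → IsAtomP (iterBl L l).1 a →
    blowDown L l a ∈ N → (iterBl L l).1.le a z

section Atoms

variable {L : Type} [Lattice L] [OrderBot L] [DecidableEq L] {l : List L}

theorem isAtomP_iterBl_iff (hl : l.Nodup) {a : (iterBl L l).1.α} :
    IsAtomP (iterBl L l).1 a ↔ (iterBl L l).1.mem a ∧ IsAtom (blCoords l a) := by
  refine isAtomP_iff_isAtom (blCoords_injective hl) (iterBl_le_iff hl) fun a ha y hy => ?_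
  have hc := blCoords_blMk_of_subset y.1 (hy.2.trans (blCoords_snd_subset l a))
  refine ⟨blMk y.1 y.2 l, ?_, hc⟩
  rw [iterBl_mem_iff hl, hc]
  exact ((iterBl_mem_iff hl a).1 ha).mono hy.1 hy.2

theorem isAtomP_blMk_atom (hpw : l.Pairwise (fun a b => ¬ b ≤ a))
    (hl : ∀ q ∈ l, ⊥ < q ∧ ¬ IsAtom q) {b : L} (hb : IsAtom b) :
    IsAtomP (iterBl L l).1 (blMk b ∅ l) := by
  have hc := blCoords_blMk_of_subset b (Finset.empty_subset l.toFinset)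
  rw [isAtomP_iterBl_iff hpw.nodup_of_not_le, iterBl_mem_iff hpw.nodup_of_not_le, hc]
  refine ⟨admissible_of_forall hpw fun R hR q hq _ hqb => ?_, Prod.isAtom_iff.2 (Or.inl ⟨hb, rfl⟩)⟩
  rw [Finset.subset_empty.1 hR, Finset.sup_empty, sup_bot_eq] at hqb
  rcases hb.le_iff.1 hqb with h | h
  · exact (hl q hq).1.ne' h
  · exact (hl q hq).2 (h ▸ hb)

theorem isAtomP_blMk_singleton (hpw : l.Pairwise (fun a b => ¬ b ≤ a)) (hl : ∀ q ∈ l, ⊥ < q)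
    {p : L} (hp : p ∈ l) : IsAtomP (iterBl L l).1 (blMk ⊥ {p} l) := by
  have hc := blCoords_blMk_of_subset (⊥ : L)
    (Finset.singleton_subset_iff.2 (List.mem_toFinset.2 hp))
  rw [isAtomP_iterBl_iff hpw.nodup_of_not_le, iterBl_mem_iff hpw.nodup_of_not_le, hc]
  refine ⟨admissible_of_forall hpw fun R hR q hq hqR hqp => ?_,
    Prod.isAtom_iff.2 (Or.inr ⟨Finset.isAtom_singleton p, rfl⟩)⟩
  rcases Finset.subset_singleton_iff.1 hR with rfl | rfl
  · exact (hl q hq).ne' (le_bot_iff.1 (by simpa using hqp))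
  · exact hqR p (Finset.mem_singleton_self p) (by simpa using hqp)

theorem isNestedIn_of_isBoundedInBlowup {H N : Set L} (hH : ∀ h ∈ H, ⊥ < h) (hN : N ⊆ H)
    (hl1 : ∀ q, q ∈ l ↔ q ∈ H ∧ ¬ IsAtom q) (hpw : l.Pairwise (fun a b => ¬ b ≤ a))
    (hbound : IsBoundedInBlowup L l N) : IsNestedIn L H N := by
  classical
  obtain ⟨z, hz, hzb⟩ := hbound
  intro S hSN hcard hS hSH
  have hl : l.Nodup := hpw.nodup_of_not_le
  have hlt : ∀ b ∈ S, b < S.sup id := fun b hb => hS.lt_sup_of_two_le_card hcard hb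
  have hsl : S.sup id ∈ l := by
    refine (hl1 _).2 ⟨hSH, fun hat => ?_⟩
    obtain ⟨b, hb⟩ := Finset.card_pos.1 (two_pos.trans_le hcard)
    exact (hH b (hN (hSN hb))).ne' (hat.lt_iff.1 (hlt b hb))
  have hlH : ∀ q ∈ l, ⊥ < q ∧ ¬ IsAtom q := fun q hq => ⟨hH q ((hl1 q).1 hq).1, ((hl1 q).1 hq).2⟩
  have hbelow : ∀ {x M}, M ⊆ l.toFinset → IsAtomP (iterBl L l).1 (blMk x M l) →
      x ⊔ M.sup id ∈ N → x ≤ (blCoords l z).1 ∧ M ⊆ (blCoords l z).2 := fun hM hat hd => by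
    have := hzb _ hat.1 hat (by rwa [blowDown_eq, blCoords_blMk_of_subset _ hM])
    rwa [iterBl_le_iff hl, blCoords_blMk_of_subset _ hM, Prod.le_def] at this
  set R := S.filter (¬ IsAtom ·)
  have hRl : ∀ r ∈ R, r ∈ l := fun r hr =>
    (hl1 r).2 ⟨hN (hSN (Finset.mem_filter.1 hr).1), (Finset.mem_filter.1 hr).2⟩
  refine ((iterBl_mem_iff hl z).1 hz).not_le_sup hpw (R := R) (fun r hr => ?_) hRl hsl
    (fun r hr => hlt r (Finset.mem_filter.1 hr).1) (Finset.sup_le fun b hb => ?_)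
  · have hrl := hRl r hr
    refine (hbelow (by simpa using hrl) (isAtomP_blMk_singleton hpw (fun q hq => (hlH q hq).1) hrl)
      (by simpa using hSN (Finset.mem_filter.1 hr).1)).2 (Finset.mem_singleton_self r)
  · by_cases hba : IsAtom b
    · exact le_sup_of_le_left (hbelow (Finset.empty_subset _) (isAtomP_blMk_atom hpw hlH hba)
        (by simpa using hSN hb)).1
    · exact le_sup_of_le_right (Finset.le_sup (f := id) (Finset.mem_filter.2 ⟨hb, hba⟩))

end Atoms

theorem IsNestedIn.isBoundedInBlowup {L : Type} [Lattice L] [BoundedOrder L] [Fintype L]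
    [DecidableEq L] {l : List L} {G H N : Set L} (hnest : IsNestedIn L H N)
    (hG : IsBuildingSet L G) (hH : IsPartialBuilding L G H) (hN : N ⊆ H)
    (hlH : ∀ q ∈ l, q ∈ H ∧ ¬ IsAtom q) (hpw : l.Pairwise (fun a b => ¬ b ≤ a)) :
    IsBoundedInBlowup L l N := by
  classical
  have hl : l.Nodup := hpw.nodup_of_not_le
  set A := Finset.univ.filter fun a => a ∈ N ∧ IsAtom a
  set M := l.toFinset.filter (· ∈ N)
  have hc := blCoords_blMk_of_subset (A.sup id) (Finset.filter_subset (· ∈ N) l.toFinset)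
  refine ⟨blMk (A.sup id) M l, ?_, fun a _ hat hd => ?_⟩
  · rw [iterBl_mem_iff hl, hc]
    refine admissible_of_forall hpw fun R hRM q hq hqR hle => ?_
    obtain ⟨b, hb, hqb⟩ := hnest.exists_mem_ge hG hH hN (B := A ∪ R)
      (fun b hb => (Finset.mem_union.1 hb).elim (fun h => (Finset.mem_filter.1 h).2.1)
        fun h => (Finset.mem_filter.1 (hRM h)).2)
      (hlH q hq).1 (hlH q hq).2 (by rwa [Finset.sup_union])
    rcases Finset.mem_union.1 hb with hbA | hbR
    · rcases (Finset.mem_filter.1 hbA).2.2.le_iff.1 hqb with h | h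
      · exact (hG.1 q (hH.1 (hlH q hq).1)).ne' h
      · exact (hlH q hq).2 (h ▸ (Finset.mem_filter.1 hbA).2.2)
    · exact hqR b hbR hqb
  · rw [iterBl_le_iff hl, hc, Prod.le_def]
    rw [blowDown_eq] at hd
    rcases Prod.isAtom_iff.1 ((isAtomP_iterBl_iff hl).1 hat).2 with ⟨h1, h2⟩ | ⟨h1, h2⟩
    · rw [Finset.bot_eq_empty] at h2
      rw [h2, Finset.sup_empty, sup_bot_eq] at hd
      exact ⟨Finset.le_sup (f := id) (Finset.mem_filter.2 ⟨Finset.mem_univ _, hd, h1⟩),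
        h2 ▸ Finset.empty_subset _⟩
    · obtain ⟨p, hp⟩ := Finset.isAtom_iff.1 h1
      rw [hp, h2, Finset.sup_singleton, id, bot_sup_eq] at hd
      refine ⟨h2 ▸ bot_le, hp ▸ Finset.singleton_subset_iff.2 (Finset.mem_filter.2 ⟨?_, hd⟩)⟩
      exact blCoords_snd_subset l a (hp ▸ Finset.mem_singleton_self p)

theorem nested_iff_bounded_in_blowup_general {L : Type} [Lattice L] [BoundedOrder L]
    [Fintype L] [DecidableEq L]
    (G : Set L) (hG : IsBuildingSet L G)
    (H : Set L) (hH : IsPartialBuilding L G H)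
    (l : List L) (hl1 : ∀ q, q ∈ l ↔ q ∈ H ∧ ¬ IsAtom q) (hl2 : l.Nodup)
    (hl3 : ∀ i j : Fin l.length, l.get i < l.get j → i < j)
    (N : Set L) (hN : N ⊆ H) :
    IsNestedIn L H N ↔
      ∃ z : (iterBl L l).1.α, (iterBl L l).1.mem z ∧
        ∀ a : (iterBl L l).1.α, (iterBl L l).1.mem a → IsAtomP (iterBl L l).1 a →
          blowDown L l a ∈ N → (iterBl L l).1.le a z := by
  have hpw := List.pairwise_not_le_of_get_lt hl2 hl3
  exact ⟨fun hnest => hnest.isBoundedInBlowup hG hH hN (fun q => (hl1 q).1) hpw,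
    isNestedIn_of_isBoundedInBlowup (fun h hh => hG.1 h (hH.1 hh)) hN hl1 hpw⟩

/-- a subset `N ⊆ H` of a partial building set is `H`-nested if
and only if, viewing `H` as the atom set of the iterated blowup `L(L,H)`
(atoms correspond to `H` via the blow-down map), `N` has an upper bound in
`L(L,H)`, i.e. `N` is a simplex of the atomic complex `K(L(L,H))`.  The list
`l` enumerates the non-atomic elements `H°` of `H` compatibly with the blowup
order (larger elements blown up first, i.e. later in the list). -/
theorem nested_iff_bounded_in_blowup {L : Type} [Lattice L] [BoundedOrder L]
    [Fintype L] [DecidableEq L]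
    (hgeo : IsGeomLat L) (G : Set L) (hG : IsBuildingSet L G) (htop : ⊤ ∈ G)
    (H : Set L) (hH : IsPartialBuilding L G H)
    (l : List L) (hl1 : ∀ q, q ∈ l ↔ q ∈ H ∧ ¬ IsAtom q) (hl2 : l.Nodup)
    (hl3 : ∀ i j : Fin l.length, l.get i < l.get j → i < j)
    (N : Set L) (hN : N ⊆ H) :
    IsNestedIn L H N ↔
      ∃ z : (iterBl L l).1.α, (iterBl L l).1.mem z ∧
        ∀ a : (iterBl L l).1.α, (iterBl L l).1.mem a → IsAtomP (iterBl L l).1 a →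
          blowDown L l a ∈ N → (iterBl L l).1.le a z :=
  nested_iff_bounded_in_blowup_general G hG H hH l hl1 hl2 hl3 N hN
end
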